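/- arXiv:1410.6200 — 4 statements merged into one kernel-verified Lean document; each statement's English description precedes it below -/
import Mathlib

section
/- Let E_r(z) = {x ∈ ℝ² : (x₁−z₁)² + ((x₂−z₂)/λ)² < r²} be an ellipse with λ > 0, and let k be the fundamental singular strain at z with Burgers modulus b, and L = diag(μ, μλ²). Then Lk(x) · n(x) = 0 for every x ∈ ∂E_r(z), where n is the outward unit normal to E_r(z). -/
/-- The fundamental singular strain of a screw dislocation at `z` with Burgers
modulus `b`, for Lamé modulus `lam`. -/
noncomputable def kfun (lam b : ℝ) (z x : ℝ × ℝ) : ℝ × ℝ :=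
  (b * lam / (2 * Real.pi * (lam ^ 2 * (x.1 - z.1) ^ 2 + (x.2 - z.2) ^ 2)) * (-(x.2 - z.2)),
   b * lam / (2 * Real.pi * (lam ^ 2 * (x.1 - z.1) ^ 2 + (x.2 - z.2) ^ 2)) * (x.1 - z.1))

/-- The hypothesis says that `n` is parallel to `(λ²(x₁−z₁), x₂−z₂)`, the normal at `x` of the
ellipse `(x₁−z₁)² + ((x₂−z₂)/λ)² = const` through `x`; since `k(x)` is a multiple of the
rotated vector `(−(x₂−z₂), x₁−z₁)`, the stress `diag(μ, μλ²) k(x)` is tangent to it. -/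
theorem L_kfun_dot_eq_zero_of_ellipse_normal (lam mu b : ℝ) (z x n : ℝ × ℝ)
    (hn : lam ^ 2 * (x.1 - z.1) * n.2 = (x.2 - z.2) * n.1) :
    mu * (kfun lam b z x).1 * n.1 + mu * lam ^ 2 * (kfun lam b z x).2 * n.2 = 0 := by
  simp only [kfun]
  linear_combination
    mu * (b * lam / (2 * Real.pi * (lam ^ 2 * (x.1 - z.1) ^ 2 + (x.2 - z.2) ^ 2))) * hn

theorem L_kfun_dot_normal_eq_zero_general (lam mu b r : ℝ) (z : ℝ × ℝ) :
    ∀ τ : ℝ,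
      mu * (kfun lam b z (z.1 + r * Real.cos τ, z.2 + lam * r * Real.sin τ)).1 *
          (lam * Real.cos τ / Real.sqrt (lam ^ 2 * Real.cos τ ^ 2 + Real.sin τ ^ 2))
        + mu * lam ^ 2 *
            (kfun lam b z (z.1 + r * Real.cos τ, z.2 + lam * r * Real.sin τ)).2 *
          (Real.sin τ / Real.sqrt (lam ^ 2 * Real.cos τ ^ 2 + Real.sin τ ^ 2)) = 0 := by
  intro τ
  set s := Real.sqrt (lam ^ 2 * Real.cos τ ^ 2 + Real.sin τ ^ 2)
  apply L_kfun_dot_eq_zero_of_ellipse_normal lam mu b z _ (lam * Real.cos τ / s, Real.sin τ / s)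
  simp only [add_sub_cancel_left]
  ring

/-- On the boundary of the ellipse `E_r(z) = {x : (x₁−z₁)² + ((x₂−z₂)/λ)² < r²}`,
whose points are `z + (r cos τ, λ r sin τ)` and whose outward unit normal is
`(λ cos τ, sin τ)/√(λ²cos²τ + sin²τ)`, one has `Lk · n = 0` with `L = diag(μ, μλ²)`. -/
theorem L_kfun_dot_normal_eq_zero (lam mu b r : ℝ) (hlam : 0 < lam) (hmu : 0 < mu)
    (hr : 0 < r) (z : ℝ × ℝ) :
    ∀ τ : ℝ,
      mu * (kfun lam b z (z.1 + r * Real.cos τ, z.2 + lam * r * Real.sin τ)).1 *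
          (lam * Real.cos τ / Real.sqrt (lam ^ 2 * Real.cos τ ^ 2 + Real.sin τ ^ 2))
        + mu * lam ^ 2 *
            (kfun lam b z (z.1 + r * Real.cos τ, z.2 + lam * r * Real.sin τ)).2 *
          (Real.sin τ / Real.sqrt (lam ^ 2 * Real.cos τ ^ 2 + Real.sin τ ^ 2)) = 0 :=
  L_kfun_dot_normal_eq_zero_general lam mu b r z
end

section
/- For 0 < ε < R, the elastic energy of the fundamental singular strain k over the elliptical annulus A = E_R(z) \ closure(E_ε(z)) satisfies ∫_A (1/2) k · Lk dx = (μ λ b²)/(4π) · log(R/ε). -/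
open MeasureTheory

/-- The open ellipse `E_r(z) = {x : (x₁−z₁)² + ((x₂−z₂)/λ)² < r²}`. -/
def ellipse (lam : ℝ) (z : ℝ × ℝ) (r : ℝ) : Set (ℝ × ℝ) :=
  {x : ℝ × ℝ | (x.1 - z.1) ^ 2 + ((x.2 - z.2) / lam) ^ 2 < r ^ 2}

/-! In the coordinates `w = (x₁ - z₁) + i (x₂ - z₂) / λ` the ellipse `E_r(z)` is the disc
`‖w‖ < r`, Lebesgue measure is multiplied by `λ`, and the energy density `W(k)` becomes
`μ b² / (8 π² ‖w‖²)`. Integrating `‖w‖⁻²` over the annulus `ε < ‖w‖ < R` in polar coordinates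
gives `2π log (R / ε)`. -/

open Set Metric Real

theorem Complex.integral_ball_diff_closedBall_fun_norm {E : Type*} [NormedAddCommGroup E]
    [NormedSpace ℝ E] (f : ℝ → E) {ε R : ℝ} (hε : 0 ≤ ε) :
    ∫ w in ball (0 : ℂ) R \ closedBall 0 ε, f ‖w‖ = (2 * π) • ∫ r in Ioo ε R, r • f r := by
  have hind : (ball (0 : ℂ) R \ closedBall 0 ε).indicator (fun w => f ‖w‖)
      = fun w => (Ioo ε R).indicator f ‖w‖ := by
    ext w
    simp [indicator, and_comm]
  rw [← integral_indicator (measurableSet_ball.diff measurableSet_closedBall), hind,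
    integral_fun_norm_addHaar volume, Complex.finrank_real_complex]
  have hvol : volume.real (ball (0 : ℂ) 1) = π := by
    simp [Measure.real, Complex.volume_ball]
  have hsub : Ioo ε R ⊆ Ioi 0 := fun r hr => hε.trans_lt hr.1
  simp_rw [Nat.add_one_sub_one, pow_one]
  rw [← indicator_smul (Ioo ε R) (fun y => y) f, hvol, ← Nat.cast_smul_eq_nsmul ℝ, smul_smul,
    Nat.cast_ofNat, setIntegral_indicator measurableSet_Ioo, inter_eq_right.mpr hsub]

theorem Complex.integral_ball_diff_closedBall_inv_sq_norm {ε R : ℝ} (hε : 0 < ε) (hεR : ε ≤ R) :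
    ∫ w in ball (0 : ℂ) R \ closedBall 0 ε, (‖w‖ ^ 2)⁻¹ = 2 * π * Real.log (R / ε) := by
  have hinv : ∫ r in Ioo ε R, r • (r ^ 2)⁻¹ = ∫ r in Ioo ε R, r⁻¹ :=
    setIntegral_congr_fun measurableSet_Ioo fun r hr => by
      rw [smul_eq_mul, pow_two, mul_inv, mul_inv_cancel_left₀ (hε.trans hr.1).ne']
  rw [Complex.integral_ball_diff_closedBall_fun_norm (fun r => (r ^ 2)⁻¹) hε.le, smul_eq_mul, hinv,
    ← integral_Ioc_eq_integral_Ioo, ← intervalIntegral.integral_of_le hεR,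
    integral_inv_of_pos hε (hε.trans_le hεR)]

section ellipseCoord

variable {lam : ℝ}

noncomputable def ellipseCoord (hlam : lam ≠ 0) (z : ℝ × ℝ) : ℝ × ℝ ≃ₜ ℂ where
  toFun x := ⟨x.1 - z.1, (x.2 - z.2) / lam⟩
  invFun w := (w.re + z.1, lam * w.im + z.2)
  left_inv x := by ext <;> simp [field]
  right_inv w := by apply Complex.ext <;> simp [field]
  continuous_toFun := Complex.equivRealProdCLM.symm.continuous.comp
    (by fun_prop : Continuous fun x : ℝ × ℝ => (x.1 - z.1, (x.2 - z.2) / lam))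
  continuous_invFun := by fun_prop

variable (hlam : lam ≠ 0) (z : ℝ × ℝ)

@[simp]
theorem ellipseCoord_apply (x : ℝ × ℝ) :
    ellipseCoord hlam z x = ⟨x.1 - z.1, (x.2 - z.2) / lam⟩ := rfl

theorem sq_norm_ellipseCoord (x : ℝ × ℝ) :
    ‖ellipseCoord hlam z x‖ ^ 2 = (x.1 - z.1) ^ 2 + ((x.2 - z.2) / lam) ^ 2 := by
  rw [Complex.sq_norm, Complex.normSq_apply, ellipseCoord_apply]
  ring

theorem ellipse_eq_preimage_ball {r : ℝ} (hr : 0 ≤ r) :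
    ellipse lam z r = ellipseCoord hlam z ⁻¹' ball 0 r := by
  ext x
  rw [mem_preimage, mem_ball_zero_iff, ← pow_lt_pow_iff_left₀ (norm_nonneg _) hr two_ne_zero,
    sq_norm_ellipseCoord]
  rfl

theorem closure_ellipse {r : ℝ} (hr : 0 < r) :
    closure (ellipse lam z r) = ellipseCoord hlam z ⁻¹' closedBall 0 r := by
  rw [ellipse_eq_preimage_ball hlam z hr.le, ← Homeomorph.preimage_closure, closure_ball 0 hr.ne']

theorem map_ellipseCoord_volume :
    Measure.map (ellipseCoord hlam z) volume = ENNReal.ofReal |lam| • volume := by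
  set D : (ℝ × ℝ) →ₗ[ℝ] ℝ × ℝ := LinearMap.prodMap LinearMap.id (lam⁻¹ • LinearMap.id)
  have hD : LinearMap.det D = lam⁻¹ := by
    simp [D, LinearMap.det_prodMap]
  have hcomp : ⇑(ellipseCoord hlam z) = Complex.measurableEquivRealProd.symm ∘ D ∘ (· - z) := by
    funext x
    simp [D, div_eq_inv_mul]
  rw [hcomp, ← Measure.map_map (by fun_prop) (by fun_prop),
    ← Measure.map_map (by fun_prop) (by fun_prop), map_sub_right_eq_self,
    Measure.map_linearMap_addHaar_eq_smul_addHaar _ (by simpa [hD] using hlam), Measure.map_smul,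
    Complex.volume_preserving_equiv_real_prod.symm.map_eq, hD, inv_inv]

theorem setIntegral_comp_ellipseCoord {E : Type*} [NormedAddCommGroup E] [NormedSpace ℝ E]
    (f : ℂ → E) (A : Set ℂ) :
    ∫ x in ellipseCoord hlam z ⁻¹' A, f (ellipseCoord hlam z x) = |lam| • ∫ w in A, f w := by
  rw [← (ellipseCoord hlam z).measurableEmbedding.setIntegral_map, map_ellipseCoord_volume,
    Measure.restrict_smul, integral_smul_measure, ENNReal.toReal_ofReal (abs_nonneg _)]

theorem energy_kfun_eq (mu b : ℝ) (x : ℝ × ℝ) :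
    (1 / 2 : ℝ) * ((kfun lam b z x).1 * (mu * (kfun lam b z x).1)
      + (kfun lam b z x).2 * (mu * lam ^ 2 * (kfun lam b z x).2))
      = mu * b ^ 2 / (8 * π ^ 2) * (‖ellipseCoord hlam z x‖ ^ 2)⁻¹ := by
  have hden : lam ^ 2 * (x.1 - z.1) ^ 2 + (x.2 - z.2) ^ 2
      = lam ^ 2 * ‖ellipseCoord hlam z x‖ ^ 2 := by
    rw [sq_norm_ellipseCoord]
    field_simp
  simp only [kfun, hden]
  generalize ‖ellipseCoord hlam z x‖ ^ 2 = n at hden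
  rcases eq_or_ne n 0 with rfl | hn
  · simp
  · field_simp
    linear_combination 8 * b ^ 2 * mu * hden

end ellipseCoord

theorem energy_annulus_general (lam mu b ε R : ℝ) (hlam : 0 < lam) (hε : 0 < ε) (hεR : ε < R)
    (z : ℝ × ℝ) :
    (∫ x in ellipse lam z R \ closure (ellipse lam z ε),
        (1 / 2 : ℝ) * ((kfun lam b z x).1 * (mu * (kfun lam b z x).1)
          + (kfun lam b z x).2 * (mu * lam ^ 2 * (kfun lam b z x).2)))
      = mu * lam * b ^ 2 / (4 * Real.pi) * Real.log (R / ε) := by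
  have hlam₀ := hlam.ne'
  rw [closure_ellipse hlam₀ z hε, ellipse_eq_preimage_ball hlam₀ z (hε.trans hεR).le,
    ← preimage_sdiff]
  simp_rw [energy_kfun_eq hlam₀ z mu b]
  rw [setIntegral_comp_ellipseCoord hlam₀ z (fun w => mu * b ^ 2 / (8 * π ^ 2) * (‖w‖ ^ 2)⁻¹),
    integral_const_mul, Complex.integral_ball_diff_closedBall_inv_sq_norm hε hεR.le,
    abs_of_pos hlam, smul_eq_mul]
  field_simp
  ring

/-- The elastic energy `∫ W(k)` over the elliptical annulus `E_R(z) \ closure(E_ε(z))`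
equals `(μλb²/4π) log(R/ε)`, where `W(h) = (1/2) h·Lh` and `L = diag(μ, μλ²)`. -/
theorem energy_annulus (lam mu b ε R : ℝ) (hlam : 0 < lam) (hmu : 0 < mu)
    (hε : 0 < ε) (hεR : ε < R) (z : ℝ × ℝ) :
    (∫ x in ellipse lam z R \ closure (ellipse lam z ε),
        (1 / 2 : ℝ) * ((kfun lam b z x).1 * (mu * (kfun lam b z x).1)
          + (kfun lam b z x).2 * (mu * lam ^ 2 * (kfun lam b z x).2)))
      = mu * lam * b ^ 2 / (4 * Real.pi) * Real.log (R / ε) :=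
  energy_annulus_general lam mu b ε R hlam hε hεR z
end

section
/- On the ellipse ∂E_R(z), the quadratic form satisfies k(x; z) · L k(x; z) = μ b² / (4π² R²), a constant independent of the point x ∈ ∂E_R(z); consequently ∫_{∂E_R(z)} (1/2)(k · Lk) n ds = 0, where n is the outward unit normal. -/
/-- The quadratic form `k · Lk` with `L = diag(μ, μλ²)`. -/
noncomputable def kLk (lam mu b : ℝ) (z x : ℝ × ℝ) : ℝ :=
  (kfun lam b z x).1 * (mu * (kfun lam b z x).1)
    + (kfun lam b z x).2 * (mu * lam ^ 2 * (kfun lam b z x).2)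

open Real intervalIntegral

theorem kLk_eq_of_mem_ellipse {lam mu b R : ℝ} (hlam : lam ≠ 0) (hR : R ≠ 0) {z x : ℝ × ℝ}
    (hx : lam ^ 2 * (x.1 - z.1) ^ 2 + (x.2 - z.2) ^ 2 = lam ^ 2 * R ^ 2) :
    kLk lam mu b z x = mu * b ^ 2 / (4 * π ^ 2 * R ^ 2) := by
  simp only [kLk, kfun]
  rw [hx]
  field_simp
  linear_combination 4 * b ^ 2 * mu * hx

theorem ellipse_eq_of_eccentric_anomaly (lam R τ : ℝ) (z : ℝ × ℝ) :
    lam ^ 2 * (z.1 + R * cos τ - z.1) ^ 2 + (z.2 + lam * R * sin τ - z.2) ^ 2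
      = lam ^ 2 * R ^ 2 := by
  linear_combination lam ^ 2 * R ^ 2 * sin_sq_add_cos_sq τ

theorem integral_ellipse_normal_eq_zero (lam R : ℝ) :
    (∫ τ in (0 : ℝ)..2 * π, R * (lam * cos τ)) = 0 ∧ (∫ τ in (0 : ℝ)..2 * π, R * sin τ) = 0 := by
  simp only [integral_const_mul, integral_cos, integral_sin, sin_two_pi, cos_two_pi, sin_zero,
    cos_zero]
  norm_num

theorem kLk_const_and_boundary_integral_zero_general (lam mu b R : ℝ)
    (hlam : 0 < lam) (hR : 0 < R) (z : ℝ × ℝ) :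
    (∀ τ : ℝ,
      kLk lam mu b z (z.1 + R * Real.cos τ, z.2 + lam * R * Real.sin τ)
        = mu * b ^ 2 / (4 * Real.pi ^ 2 * R ^ 2))
    ∧ (∫ τ in (0:ℝ)..(2 * Real.pi),
        (1 / 2 : ℝ) * kLk lam mu b z (z.1 + R * Real.cos τ, z.2 + lam * R * Real.sin τ)
          * (R * (lam * Real.cos τ))) = 0
    ∧ (∫ τ in (0:ℝ)..(2 * Real.pi),
        (1 / 2 : ℝ) * kLk lam mu b z (z.1 + R * Real.cos τ, z.2 + lam * R * Real.sin τ)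
          * (R * Real.sin τ)) = 0 := by
  have hconst : ∀ τ : ℝ, kLk lam mu b z (z.1 + R * cos τ, z.2 + lam * R * sin τ)
      = mu * b ^ 2 / (4 * π ^ 2 * R ^ 2) := fun τ =>
    kLk_eq_of_mem_ellipse hlam.ne' hR.ne' (ellipse_eq_of_eccentric_anomaly lam R τ z)
  obtain ⟨hnormal₁, hnormal₂⟩ := integral_ellipse_normal_eq_zero lam R
  refine ⟨hconst, ?_, ?_⟩
  · simp_rw [hconst]
    rw [integral_const_mul, hnormal₁, mul_zero]
  · simp_rw [hconst]
    rw [integral_const_mul, hnormal₂, mul_zero]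

/-- On `∂E_R(z)` (points `z + (R cos τ, λ R sin τ)`), `k·Lk = μb²/(4π²R²)` is constant;
consequently `∫_{∂E_R(z)} (1/2)(k·Lk) n ds = 0`, where in eccentric anomaly
`n ds = R (λ cos τ, sin τ) dτ`. -/
theorem kLk_const_and_boundary_integral_zero (lam mu b R : ℝ)
    (hlam : 0 < lam) (hmu : 0 < mu) (hR : 0 < R) (z : ℝ × ℝ) :
    (∀ τ : ℝ,
      kLk lam mu b z (z.1 + R * Real.cos τ, z.2 + lam * R * Real.sin τ)
        = mu * b ^ 2 / (4 * Real.pi ^ 2 * R ^ 2))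
    ∧ (∫ τ in (0:ℝ)..(2 * Real.pi),
        (1 / 2 : ℝ) * kLk lam mu b z (z.1 + R * Real.cos τ, z.2 + lam * R * Real.sin τ)
          * (R * (lam * Real.cos τ))) = 0
    ∧ (∫ τ in (0:ℝ)..(2 * Real.pi),
        (1 / 2 : ℝ) * kLk lam mu b z (z.1 + R * Real.cos τ, z.2 + lam * R * Real.sin τ)
          * (R * Real.sin τ)) = 0 :=
  kLk_const_and_boundary_integral_zero_general lam mu b R hlam hR z
end

section
/- Let h̃ : closure(E_R(z)) → ℝ² be continuous. Then lim_{R→0} ∫_{∂E_R(z)} (n ⊗ k − k ⊗ n) L h̃ ds = b J L h̃(z), where k is the fundamental singular strain at z with Burgers modulus b, n is the outward unit normal to the ellipse E_R(z), J = ((0,1),(−1,0)), and L = diag(μ, μλ²). -/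
/-!
In the eccentric anomaly, `k = (−b sin τ/(2πR), b cos τ/(2πλR))` on `∂E_R(z)` while
`n ds = R (λ cos τ, sin τ) dτ`, so `(n₁k₂ − k₁n₂) ds = b/(2π) dτ` for every `R`. Each
component of the boundary integral is therefore a constant multiple of the mean of a
component of `h̃` over the ellipse, and these means tend to the value at the centre because the
ellipses shrink uniformly onto `z`.
-/

open Real

open Filter Set Topology

theorem ContinuousWithinAt.comp_tendstoUniformlyOn_const {ι α X Y : Type*}
    [PseudoMetricSpace X] [PseudoMetricSpace Y] {f : X → Y} {s : Set X} {x : X}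
    {γ : ι → α → X} {l : Filter ι} {S : Set α} (hf : ContinuousWithinAt f s x)
    (hγ : TendstoUniformlyOn γ (fun _ => x) l S) (hγs : ∀ᶠ i in l, ∀ τ ∈ S, γ i τ ∈ s) :
    TendstoUniformlyOn (fun i τ => f (γ i τ)) (fun _ => f x) l S := by
  rw [Metric.tendstoUniformlyOn_iff] at hγ ⊢
  intro ε hε
  obtain ⟨δ, hδ, hfδ⟩ := Metric.continuousWithinAt_iff.mp hf ε hε
  filter_upwards [hγ δ hδ, hγs] with i hiδ his τ hτ
  rw [dist_comm]
  exact hfδ (his τ hτ) (dist_comm x _ ▸ hiδ τ hτ)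

-- Reducible, so that `ring` identifies it with the explicit pairs of the main statement.
noncomputable abbrev ellipsePoint (lam : ℝ) (z : ℝ × ℝ) (R τ : ℝ) : ℝ × ℝ :=
  (z.1 + R * Real.cos τ, z.2 + lam * R * Real.sin τ)

theorem continuous_ellipsePoint (lam : ℝ) (z : ℝ × ℝ) (R : ℝ) :
    Continuous (ellipsePoint lam z R) := by
  fun_prop

theorem ellipsePoint_mem_ellipse {lam R r : ℝ} (hlam : lam ≠ 0) (hR : |R| < r) (z : ℝ × ℝ)
    (τ : ℝ) : ellipsePoint lam z R τ ∈ ellipse lam z r := by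
  have hsq : (R * Real.cos τ) ^ 2 + (lam * R * Real.sin τ / lam) ^ 2 = R ^ 2 := by
    field_simp
    linear_combination R ^ 2 * Real.cos_sq_add_sin_sq τ
  show (z.1 + R * Real.cos τ - z.1) ^ 2 + ((z.2 + lam * R * Real.sin τ - z.2) / lam) ^ 2 < r ^ 2
  simp only [add_sub_cancel_left, hsq]
  exact sq_lt_sq' (neg_lt_of_abs_lt hR) (lt_of_abs_lt hR)

theorem dist_ellipsePoint_le (lam : ℝ) (z : ℝ × ℝ) (R τ : ℝ) :
    dist (ellipsePoint lam z R τ) z ≤ (1 + |lam|) * |R| := by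
  have hcos : |R * Real.cos τ| ≤ |R| := by
    rw [abs_mul]; exact mul_le_of_le_one_right (abs_nonneg R) (Real.abs_cos_le_one τ)
  have hsin : |lam * R * Real.sin τ| ≤ |lam| * |R| := by
    rw [abs_mul, abs_mul]
    exact mul_le_of_le_one_right (by positivity) (Real.abs_sin_le_one τ)
  rw [Prod.dist_eq, Real.dist_eq, Real.dist_eq]
  simp only [add_sub_cancel_left]
  exact max_le (by nlinarith [abs_nonneg lam, abs_nonneg R])
    (by nlinarith [abs_nonneg lam, abs_nonneg R])

theorem tendstoUniformly_ellipsePoint (lam : ℝ) (z : ℝ × ℝ) :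
    TendstoUniformly (ellipsePoint lam z) (fun _ => z) (𝓝 0) := by
  rw [Metric.tendstoUniformly_iff]
  intro ε hε
  have hlim : Tendsto (fun R : ℝ => (1 + |lam|) * |R|) (𝓝 0) (𝓝 0) := by
    simpa using (tendsto_const_nhds (x := 1 + |lam|)).mul (continuous_abs.tendsto (0 : ℝ))
  filter_upwards [hlim.eventually (gt_mem_nhds hε)] with R hR τ
  rw [dist_comm]
  exact (dist_ellipsePoint_le lam z R τ).trans_lt hR

theorem tendsto_integral_comp_ellipsePoint {E : Type*} [NormedAddCommGroup E]
    [NormedSpace ℝ E] [CompleteSpace E] {lam r : ℝ} (hlam : lam ≠ 0) (hr : 0 < r)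
    {z : ℝ × ℝ} {f : ℝ × ℝ → E} (hf : ContinuousOn f (ellipse lam z r)) :
    Tendsto (fun R => ∫ τ in (0 : ℝ)..(2 * Real.pi), f (ellipsePoint lam z R τ)) (𝓝 0)
      (𝓝 ((2 * Real.pi) • f z)) := by
  have hinside : ∀ᶠ R in 𝓝 (0 : ℝ), ∀ τ, ellipsePoint lam z R τ ∈ ellipse lam z r := by
    filter_upwards [(continuous_abs.tendsto (0 : ℝ)).eventually (gt_mem_nhds (by simpa))]
      with R hR τ using ellipsePoint_mem_ellipse hlam hR z τ
  have hz : z ∈ ellipse lam z r := by simp [ellipse, pow_pos hr 2]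
  have hunif := (hf z hz).comp_tendstoUniformlyOn_const
    ((tendstoUniformly_ellipsePoint lam z).tendstoUniformlyOn (s := uIcc 0 (2 * Real.pi)))
    (hinside.mono fun R hR τ _ => hR τ)
  have hcont : ∀ᶠ R in 𝓝 (0 : ℝ),
      ContinuousOn (fun τ => f (ellipsePoint lam z R τ)) (uIcc 0 (2 * Real.pi)) :=
    hinside.mono fun R hR =>
      (hf.comp_continuous (continuous_ellipsePoint lam z R) hR).continuousOn
  simpa using hunif.tendsto_intervalIntegral_of_continuousOn (μ := MeasureTheory.volume) hcont

theorem kfun_ellipsePoint {lam R : ℝ} (hlam : lam ≠ 0) (hR : R ≠ 0) (b : ℝ) (z : ℝ × ℝ)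
    (τ : ℝ) :
    kfun lam b z (ellipsePoint lam z R τ)
      = (-(b * Real.sin τ) / (2 * Real.pi * R), b * Real.cos τ / (2 * Real.pi * lam * R)) := by
  have hden : lam ^ 2 * (z.1 + R * Real.cos τ - z.1) ^ 2 + (z.2 + lam * R * Real.sin τ - z.2) ^ 2
      = lam ^ 2 * R ^ 2 := by
    linear_combination (lam ^ 2 * R ^ 2) * Real.sin_sq_add_cos_sq τ
  have hπ := Real.pi_ne_zero
  simp only [kfun, hden, Prod.mk.injEq]
  constructor <;> (field_simp; ring)

theorem ellipse_speed_sq_pos {lam : ℝ} (hlam : lam ≠ 0) (τ : ℝ) :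
    0 < lam ^ 2 * Real.cos τ ^ 2 + Real.sin τ ^ 2 := by
  rcases le_total (lam ^ 2) 1 with h | h <;>
    nlinarith [Real.sin_sq_add_cos_sq τ, sq_nonneg (Real.cos τ), sq_nonneg (Real.sin τ),
      pow_pos (abs_pos.mpr hlam) 2, sq_abs lam]

theorem normal_cross_kfun_mul_speed {lam R : ℝ} (hlam : lam ≠ 0) (hR : R ≠ 0) (b : ℝ)
    (z : ℝ × ℝ) (τ : ℝ) :
    (lam * Real.cos τ / Real.sqrt (lam ^ 2 * Real.cos τ ^ 2 + Real.sin τ ^ 2) *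
          (kfun lam b z (ellipsePoint lam z R τ)).2
        - (kfun lam b z (ellipsePoint lam z R τ)).1 *
          (Real.sin τ / Real.sqrt (lam ^ 2 * Real.cos τ ^ 2 + Real.sin τ ^ 2)))
      * (R * Real.sqrt (lam ^ 2 * Real.cos τ ^ 2 + Real.sin τ ^ 2)) = b / (2 * Real.pi) := by
  have hspeed := Real.sqrt_pos.mpr (ellipse_speed_sq_pos hlam τ)
  have hπ := Real.pi_ne_zero
  rw [kfun_ellipsePoint hlam hR]
  field_simp
  linear_combination b * Real.sin_sq_add_cos_sq τ

/-- The boundary is parametrized by the eccentric anomaly, with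
`n = (λcos τ, sin τ)/√(λ²cos²τ+sin²τ)` and `ds = R √(λ²cos²τ+sin²τ) dτ`; the two integrals are the
components of `(n ⊗ k − k ⊗ n) L h̃`. -/
theorem tendsto_boundary_cross_term_general (lam mu b R₀ : ℝ) (hlam : 0 < lam)
    (hR₀ : 0 < R₀) (z : ℝ × ℝ) (htil : ℝ × ℝ → ℝ × ℝ)
    (hcont : ContinuousOn htil (closure (ellipse lam z R₀))) :
    Filter.Tendsto (fun R : ℝ =>
      ((∫ τ in (0:ℝ)..(2 * Real.pi),
          ((lam * Real.cos τ / Real.sqrt (lam ^ 2 * Real.cos τ ^ 2 + Real.sin τ ^ 2)) *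
              (kfun lam b z (z.1 + R * Real.cos τ, z.2 + lam * R * Real.sin τ)).2
            - (kfun lam b z (z.1 + R * Real.cos τ, z.2 + lam * R * Real.sin τ)).1 *
              (Real.sin τ / Real.sqrt (lam ^ 2 * Real.cos τ ^ 2 + Real.sin τ ^ 2)))
          * (mu * lam ^ 2 * (htil (z.1 + R * Real.cos τ, z.2 + lam * R * Real.sin τ)).2)
          * (R * Real.sqrt (lam ^ 2 * Real.cos τ ^ 2 + Real.sin τ ^ 2))),
       (∫ τ in (0:ℝ)..(2 * Real.pi),
          ((Real.sin τ / Real.sqrt (lam ^ 2 * Real.cos τ ^ 2 + Real.sin τ ^ 2)) *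
              (kfun lam b z (z.1 + R * Real.cos τ, z.2 + lam * R * Real.sin τ)).1
            - (kfun lam b z (z.1 + R * Real.cos τ, z.2 + lam * R * Real.sin τ)).2 *
              (lam * Real.cos τ / Real.sqrt (lam ^ 2 * Real.cos τ ^ 2 + Real.sin τ ^ 2)))
          * (mu * (htil (z.1 + R * Real.cos τ, z.2 + lam * R * Real.sin τ)).1)
          * (R * Real.sqrt (lam ^ 2 * Real.cos τ ^ 2 + Real.sin τ ^ 2)))))
      (nhdsWithin 0 (Set.Ioo 0 R₀))
      (nhds (b * (mu * lam ^ 2 * (htil z).2), b * (-(mu * (htil z).1)))) := by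
  have hmean (g : ℝ × ℝ → ℝ) (hg : ContinuousOn g (closure (ellipse lam z R₀))) :
      Tendsto (fun R => ∫ τ in (0 : ℝ)..(2 * Real.pi), g (ellipsePoint lam z R τ))
        (𝓝[Ioo 0 R₀] 0) (𝓝 (2 * Real.pi * g z)) :=
    (tendsto_integral_comp_ellipsePoint hlam.ne' hR₀ (hg.mono subset_closure)).mono_left
      nhdsWithin_le_nhds
  have hπ := Real.pi_ne_zero
  refine Tendsto.prodMk_nhds ?_ ?_
  · rw [show b * (mu * lam ^ 2 * (htil z).2)
        = b * mu * lam ^ 2 / (2 * Real.pi) * (2 * Real.pi * (htil z).2) by field_simp]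
    refine ((hmean (fun x => (htil x).2)
      (continuous_snd.comp_continuousOn hcont)).const_mul _).congr'
      (eventually_nhdsWithin_of_forall fun R hR => ?_)
    rw [← intervalIntegral.integral_const_mul]
    refine intervalIntegral.integral_congr fun τ _ => ?_
    linear_combination (-(mu * lam ^ 2 * (htil (ellipsePoint lam z R τ)).2)) *
      normal_cross_kfun_mul_speed hlam.ne' hR.1.ne' b z τ
  · rw [show b * -(mu * (htil z).1) = -(b * mu) / (2 * Real.pi) * (2 * Real.pi * (htil z).1) by
      field_simp]
    refine ((hmean (fun x => (htil x).1)
      (continuous_fst.comp_continuousOn hcont)).const_mul _).congr'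
      (eventually_nhdsWithin_of_forall fun R hR => ?_)
    rw [← intervalIntegral.integral_const_mul]
    refine intervalIntegral.integral_congr fun τ _ => ?_
    linear_combination (mu * (htil (ellipsePoint lam z R τ)).1) *
      normal_cross_kfun_mul_speed hlam.ne' hR.1.ne' b z τ

/-- Let `h̃` be continuous on `closure(E_{R₀}(z))`.  Then
`∫_{∂E_R(z)} (n ⊗ k − k ⊗ n) L h̃ ds → b J L h̃(z)` as `R → 0⁺`, where
`L = diag(μ, μλ²)`, `J = ((0,1),(−1,0))`, the boundary being parametrized by the
eccentric anomaly, with `n = (λcos τ, sin τ)/√(λ²cos²τ+sin²τ)` and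
`ds = R √(λ²cos²τ+sin²τ) dτ`; the integrals below are the two components of the
matrix-vector product `(n ⊗ k − k ⊗ n) L h̃` integrated over the boundary. -/
theorem tendsto_boundary_cross_term (lam mu b R₀ : ℝ) (hlam : 0 < lam) (hmu : 0 < mu)
    (hR₀ : 0 < R₀) (z : ℝ × ℝ) (htil : ℝ × ℝ → ℝ × ℝ)
    (hcont : ContinuousOn htil (closure (ellipse lam z R₀))) :
    Filter.Tendsto (fun R : ℝ =>
      ((∫ τ in (0:ℝ)..(2 * Real.pi),
          ((lam * Real.cos τ / Real.sqrt (lam ^ 2 * Real.cos τ ^ 2 + Real.sin τ ^ 2)) *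
              (kfun lam b z (z.1 + R * Real.cos τ, z.2 + lam * R * Real.sin τ)).2
            - (kfun lam b z (z.1 + R * Real.cos τ, z.2 + lam * R * Real.sin τ)).1 *
              (Real.sin τ / Real.sqrt (lam ^ 2 * Real.cos τ ^ 2 + Real.sin τ ^ 2)))
          * (mu * lam ^ 2 * (htil (z.1 + R * Real.cos τ, z.2 + lam * R * Real.sin τ)).2)
          * (R * Real.sqrt (lam ^ 2 * Real.cos τ ^ 2 + Real.sin τ ^ 2))),
       (∫ τ in (0:ℝ)..(2 * Real.pi),
          ((Real.sin τ / Real.sqrt (lam ^ 2 * Real.cos τ ^ 2 + Real.sin τ ^ 2)) *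
              (kfun lam b z (z.1 + R * Real.cos τ, z.2 + lam * R * Real.sin τ)).1
            - (kfun lam b z (z.1 + R * Real.cos τ, z.2 + lam * R * Real.sin τ)).2 *
              (lam * Real.cos τ / Real.sqrt (lam ^ 2 * Real.cos τ ^ 2 + Real.sin τ ^ 2)))
          * (mu * (htil (z.1 + R * Real.cos τ, z.2 + lam * R * Real.sin τ)).1)
          * (R * Real.sqrt (lam ^ 2 * Real.cos τ ^ 2 + Real.sin τ ^ 2)))))
      (nhdsWithin 0 (Set.Ioo 0 R₀))
      (nhds (b * (mu * lam ^ 2 * (htil z).2), b * (-(mu * (htil z).1)))) :=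
  tendsto_boundary_cross_term_general lam mu b R₀ hlam hR₀ z htil hcont
end
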